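/- Conversely, with the notation of Lemma 2.1 (X = φ̇ e^{-μ} − φ' e^{-λ}, Y = φ̇ e^{-μ} + φ' e^{-λ}, D±, a, b, c as defined there, with μ' replaced throughout by a given C¹ function μ̃), if the pair (X, Y) satisfies D⁺X = ãX + bY and D⁻Y = bX + c̃Y on I × ℝ and μ̃ = μ' on I × ℝ, then φ satisfies the wave equation e^{-2λ} φ'' − e^{-2μ} φ̈ − e^{-2μ}(λ̇ − μ̇ + 2/t) φ̇ − e^{-2λ}(λ' − μ') φ' = 0. -/

import Mathlib

open Real Set

/-- partial derivative with respect to the first (time) variable -/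
noncomputable def pd1 (f : ℝ → ℝ → ℝ) (t r : ℝ) : ℝ := deriv (fun τ => f τ r) t

/-- partial derivative with respect to the second (space) variable -/
noncomputable def pd2 (f : ℝ → ℝ → ℝ) (t r : ℝ) : ℝ := deriv (fun ρ => f t ρ) r

open Function

theorem exp_neg_two_mul (x : ℝ) : exp (-2 * x) = exp (-x) * exp (-x) := by
  rw [← exp_add]
  ring_nf

section PartialDerivatives

variable {f p m : ℝ → ℝ → ℝ} {t r : ℝ}

theorem hasDerivAt_fderiv_pd1 (hf : DifferentiableAt ℝ (uncurry f) (t, r)) :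
    HasDerivAt (fun τ => f τ r) (fderiv ℝ (uncurry f) (t, r) (1, 0)) t :=
  hf.hasFDerivAt.comp_hasDerivAt (f := fun τ => (τ, r)) t
    ((hasDerivAt_id' t).prodMk (hasDerivAt_const t r))

theorem hasDerivAt_fderiv_pd2 (hf : DifferentiableAt ℝ (uncurry f) (t, r)) :
    HasDerivAt (fun ρ => f t ρ) (fderiv ℝ (uncurry f) (t, r) (0, 1)) r :=
  hf.hasFDerivAt.comp_hasDerivAt (f := fun ρ => (t, ρ)) r
    ((hasDerivAt_const r t).prodMk (hasDerivAt_id' r))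

theorem hasDerivAt_pd1 (hf : DifferentiableAt ℝ (uncurry f) (t, r)) :
    HasDerivAt (fun τ => f τ r) (pd1 f t r) t :=
  (hasDerivAt_fderiv_pd1 hf).differentiableAt.hasDerivAt

theorem hasDerivAt_pd2 (hf : DifferentiableAt ℝ (uncurry f) (t, r)) :
    HasDerivAt (fun ρ => f t ρ) (pd2 f t r) r :=
  (hasDerivAt_fderiv_pd2 hf).differentiableAt.hasDerivAt

theorem contDiff_uncurry_pd1 {n : WithTop ℕ∞} (hf : ContDiff ℝ (n + 1) (uncurry f)) :
    ContDiff ℝ n (uncurry (pd1 f)) := by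
  have hd := hf.differentiable (by simp)
  have h : uncurry (pd1 f) = fun q => fderiv ℝ (uncurry f) q (1, 0) :=
    funext fun q => (hasDerivAt_fderiv_pd1 (hd q)).deriv
  rw [h]
  exact (hf.fderiv_right le_rfl).clm_apply contDiff_const

theorem contDiff_uncurry_pd2 {n : WithTop ℕ∞} (hf : ContDiff ℝ (n + 1) (uncurry f)) :
    ContDiff ℝ n (uncurry (pd2 f)) := by
  have hd := hf.differentiable (by simp)
  have h : uncurry (pd2 f) = fun q => fderiv ℝ (uncurry f) q (0, 1) :=
    funext fun q => (hasDerivAt_fderiv_pd2 (hd q)).deriv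
  rw [h]
  exact (hf.fderiv_right le_rfl).clm_apply contDiff_const

theorem hasDerivAt_pd1_mul_exp_neg (hp : DifferentiableAt ℝ (uncurry p) (t, r))
    (hm : DifferentiableAt ℝ (uncurry m) (t, r)) :
    HasDerivAt (fun τ => p τ r * exp (-m τ r))
      ((pd1 p t r - p t r * pd1 m t r) * exp (-m t r)) t :=
  ((hasDerivAt_pd1 hp).fun_mul (hasDerivAt_pd1 hm).fun_neg.exp).congr_deriv (by ring)

theorem hasDerivAt_pd2_mul_exp_neg (hp : DifferentiableAt ℝ (uncurry p) (t, r))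
    (hm : DifferentiableAt ℝ (uncurry m) (t, r)) :
    HasDerivAt (fun ρ => p t ρ * exp (-m t ρ))
      ((pd2 p t r - p t r * pd2 m t r) * exp (-m t r)) r :=
  ((hasDerivAt_pd2 hp).fun_mul (hasDerivAt_pd2 hm).fun_neg.exp).congr_deriv (by ring)

end PartialDerivatives

/-- With `X = u e^{-m} - v e^{-l}` and `Y = u e^{-m} + v e^{-l}`, the sum `D⁺X + D⁻Y` loses the
mixed derivatives `∂ᵣu` and `∂ₜv`, so no symmetry of second derivatives is needed. -/
theorem characteristic_derivatives_sum {u v m l : ℝ → ℝ → ℝ} {t r : ℝ}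
    (hu : DifferentiableAt ℝ (uncurry u) (t, r)) (hv : DifferentiableAt ℝ (uncurry v) (t, r))
    (hm : DifferentiableAt ℝ (uncurry m) (t, r)) (hl : DifferentiableAt ℝ (uncurry l) (t, r)) :
    (exp (-m t r) * pd1 (fun t r => u t r * exp (-m t r) - v t r * exp (-l t r)) t r
        + exp (-l t r) * pd2 (fun t r => u t r * exp (-m t r) - v t r * exp (-l t r)) t r)
      + (exp (-m t r) * pd1 (fun t r => u t r * exp (-m t r) + v t r * exp (-l t r)) t r
        - exp (-l t r) * pd2 (fun t r => u t r * exp (-m t r) + v t r * exp (-l t r)) t r)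
    = 2 * (exp (-2 * m t r) * (pd1 u t r - u t r * pd1 m t r)
        - exp (-2 * l t r) * (pd2 v t r - v t r * pd2 l t r)) := by
  have hu₁ := hasDerivAt_pd1_mul_exp_neg hu hm
  have hv₁ := hasDerivAt_pd1_mul_exp_neg hv hl
  have hu₂ := hasDerivAt_pd2_mul_exp_neg hu hm
  have hv₂ := hasDerivAt_pd2_mul_exp_neg hv hl
  simp only [exp_neg_two_mul]
  simp only [pd1, pd2] at hu₁ hv₁ hu₂ hv₂ ⊢
  linear_combination exp (-m t r) * ((hu₁.sub hv₁).deriv + (hu₁.add hv₁).deriv)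
    + exp (-l t r) * ((hu₂.sub hv₂).deriv - (hu₂.add hv₂).deriv)

theorem characteristic_system_to_wave_equation_general
    (I : Set ℝ)
    (μ lam φ μtilde : ℝ → ℝ → ℝ)
    (hμ : ContDiff ℝ 2 (Function.uncurry μ))
    (hlam : ContDiff ℝ 2 (Function.uncurry lam))
    (hφ : ContDiff ℝ 2 (Function.uncurry φ))
    -- the characteristic system with μ' replaced by μ̃, for
    -- X = φ̇ e^{-μ} − φ' e^{-λ}, Y = φ̇ e^{-μ} + φ' e^{-λ}
    (hX : ∀ t ∈ I, ∀ r : ℝ,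
      Real.exp (-μ t r) *
          pd1 (fun t r => pd1 φ t r * Real.exp (-μ t r) - pd2 φ t r * Real.exp (-lam t r)) t r
        + Real.exp (-lam t r) *
          pd2 (fun t r => pd1 φ t r * Real.exp (-μ t r) - pd2 φ t r * Real.exp (-lam t r)) t r
      = ((-pd1 lam t r - 1 / t) * Real.exp (-μ t r) - μtilde t r * Real.exp (-lam t r)) *
          (pd1 φ t r * Real.exp (-μ t r) - pd2 φ t r * Real.exp (-lam t r))
        + (-(Real.exp (-μ t r)) / t) *
          (pd1 φ t r * Real.exp (-μ t r) + pd2 φ t r * Real.exp (-lam t r)))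
    (hY : ∀ t ∈ I, ∀ r : ℝ,
      Real.exp (-μ t r) *
          pd1 (fun t r => pd1 φ t r * Real.exp (-μ t r) + pd2 φ t r * Real.exp (-lam t r)) t r
        - Real.exp (-lam t r) *
          pd2 (fun t r => pd1 φ t r * Real.exp (-μ t r) + pd2 φ t r * Real.exp (-lam t r)) t r
      = (-(Real.exp (-μ t r)) / t) *
          (pd1 φ t r * Real.exp (-μ t r) - pd2 φ t r * Real.exp (-lam t r))
        + ((-pd1 lam t r - 1 / t) * Real.exp (-μ t r) + μtilde t r * Real.exp (-lam t r)) *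
          (pd1 φ t r * Real.exp (-μ t r) + pd2 φ t r * Real.exp (-lam t r)))
    (hμeq : ∀ t ∈ I, ∀ r : ℝ, μtilde t r = pd2 μ t r) :
    ∀ t ∈ I, ∀ r : ℝ,
      Real.exp (-2 * lam t r) * pd2 (pd2 φ) t r
      - Real.exp (-2 * μ t r) * pd1 (pd1 φ) t r
      - Real.exp (-2 * μ t r) * (pd1 lam t r - pd1 μ t r + 2 / t) * pd1 φ t r
      - Real.exp (-2 * lam t r) * (pd2 lam t r - pd2 μ t r) * pd2 φ t r = 0 := by
  intro t ht r
  have hφ₁ : Differentiable ℝ (uncurry (pd1 φ)) :=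
    (contDiff_uncurry_pd1 (n := 1) hφ).differentiable one_ne_zero
  have hφ₂ : Differentiable ℝ (uncurry (pd2 φ)) :=
    (contDiff_uncurry_pd2 (n := 1) hφ).differentiable one_ne_zero
  have hsum := characteristic_derivatives_sum (t := t) (r := r) (hφ₁ _) (hφ₂ _)
    (hμ.differentiable two_ne_zero _) (hlam.differentiable two_ne_zero _)
  have hXY := congrArg₂ (· + ·) (hX t ht r) (hY t ht r)
  rw [hsum, hμeq t ht r] at hXY
  simp only [exp_neg_two_mul] at hXY ⊢
  linear_combination (-1 / 2 : ℝ) * hXY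

theorem characteristic_system_to_wave_equation
    (I : Set ℝ) (hI : I ⊆ Set.Ioi 0)
    (μ lam φ μtilde : ℝ → ℝ → ℝ)
    (hμ : ContDiff ℝ 2 (Function.uncurry μ))
    (hlam : ContDiff ℝ 2 (Function.uncurry lam))
    (hφ : ContDiff ℝ 2 (Function.uncurry φ))
    (hμtilde : ContDiff ℝ 1 (Function.uncurry μtilde))
    -- the characteristic system with μ' replaced by μ̃, for
    -- X = φ̇ e^{-μ} − φ' e^{-λ}, Y = φ̇ e^{-μ} + φ' e^{-λ}
    (hX : ∀ t ∈ I, ∀ r : ℝ,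
      Real.exp (-μ t r) *
          pd1 (fun t r => pd1 φ t r * Real.exp (-μ t r) - pd2 φ t r * Real.exp (-lam t r)) t r
        + Real.exp (-lam t r) *
          pd2 (fun t r => pd1 φ t r * Real.exp (-μ t r) - pd2 φ t r * Real.exp (-lam t r)) t r
      = ((-pd1 lam t r - 1 / t) * Real.exp (-μ t r) - μtilde t r * Real.exp (-lam t r)) *
          (pd1 φ t r * Real.exp (-μ t r) - pd2 φ t r * Real.exp (-lam t r))
        + (-(Real.exp (-μ t r)) / t) *
          (pd1 φ t r * Real.exp (-μ t r) + pd2 φ t r * Real.exp (-lam t r)))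
    (hY : ∀ t ∈ I, ∀ r : ℝ,
      Real.exp (-μ t r) *
          pd1 (fun t r => pd1 φ t r * Real.exp (-μ t r) + pd2 φ t r * Real.exp (-lam t r)) t r
        - Real.exp (-lam t r) *
          pd2 (fun t r => pd1 φ t r * Real.exp (-μ t r) + pd2 φ t r * Real.exp (-lam t r)) t r
      = (-(Real.exp (-μ t r)) / t) *
          (pd1 φ t r * Real.exp (-μ t r) - pd2 φ t r * Real.exp (-lam t r))
        + ((-pd1 lam t r - 1 / t) * Real.exp (-μ t r) + μtilde t r * Real.exp (-lam t r)) *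
          (pd1 φ t r * Real.exp (-μ t r) + pd2 φ t r * Real.exp (-lam t r)))
    (hμeq : ∀ t ∈ I, ∀ r : ℝ, μtilde t r = pd2 μ t r) :
    ∀ t ∈ I, ∀ r : ℝ,
      Real.exp (-2 * lam t r) * pd2 (pd2 φ) t r
      - Real.exp (-2 * μ t r) * pd1 (pd1 φ) t r
      - Real.exp (-2 * μ t r) * (pd1 lam t r - pd1 μ t r + 2 / t) * pd1 φ t r
      - Real.exp (-2 * lam t r) * (pd2 lam t r - pd2 μ t r) * pd2 φ t r = 0 :=
  characteristic_system_to_wave_equation_general I μ lam φ μtilde hμ hlam hφ hX hY hμeq
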